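/- Triangle augmentation, backward direction: let (G, rk) be an SRTI instance and let G' arise from G by adding, for each vertex v ∈ V(G), two new vertices v' and v'' together with edges {v,v'}, {v,v''}, {v',v''}, with ranks rk_v(v') = α_v + 1 and rk_v(v'') = α_v + 2 where α_v = max over w ∈ N_G(v) of rk_v(w), and rk_{v'}(v) = 2, rk_{v'}(v'') = 1, rk_{v''}(v) = 1, rk_{v''}(v') = 2. If G' contains a stable matching M', then every vertex v ∈ V(G) is matched in M' to a vertex of V(G), and the restriction of M' to edges of G is a perfect stable matching of G. -/

import Mathlib

open scoped Classical

noncomputable section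

/-- A matching of a graph `G`, given by the partner function: `partner v = v` means
that `v` is unmatched, and otherwise `v` is matched to `partner v`, which must be one
of its neighbours in the acceptability graph `G`. -/
structure Matching {V : Type} (G : SimpleGraph V) where
  partner : V → V
  involutive : ∀ v, partner (partner v) = v
  adj_of_ne : ∀ v, partner v ≠ v → G.Adj v (partner v)

/-- The set of edges of a matching. -/
def Matching.edgeSet {V : Type} {G : SimpleGraph V} (M : Matching G) : Set (Sym2 V) :=
  {e | ∃ v, M.partner v ≠ v ∧ e = s(v, M.partner v)}

/-- The pair `{v, w}` is blocking for the matching `M` (with respect to the rank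
functions `rk`, where `rk v w = ⊤` encodes that `v` prefers any acceptable partner to
`w`; in particular `rk v v = ⊤`, so that an unmatched agent prefers every neighbour to
staying alone): `v` and `w` are adjacent, and each strictly prefers the other to its
current situation. -/
def IsBlocking {V : Type} (G : SimpleGraph V) (rk : V → V → ℕ∞) (M : Matching G)
    (v w : V) : Prop :=
  G.Adj v w ∧ rk v w < rk v (M.partner v) ∧ rk w v < rk w (M.partner w)

/-- A matching is stable if no edge of `G` is blocking. -/
def Stable {V : Type} (G : SimpleGraph V) (rk : V → V → ℕ∞) (M : Matching G) : Prop :=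
  ∀ v w : V, ¬ IsBlocking G rk M v w
/-- The graph `G'` obtained from `G` by adding, for each vertex `v`, two new vertices
`v' = .inr (.inl v)` and `v'' = .inr (.inr v)` together with the triangle edges
`{v,v'}`, `{v,v''}` and `{v',v''}`. -/
def triGraph {V : Type} (G : SimpleGraph V) : SimpleGraph (V ⊕ V ⊕ V) where
  Adj a b :=
    match a, b with
    | Sum.inl v, Sum.inl w => G.Adj v w
    | Sum.inl v, Sum.inr (Sum.inl w) => v = w
    | Sum.inl v, Sum.inr (Sum.inr w) => v = w
    | Sum.inr (Sum.inl v), Sum.inl w => v = w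
    | Sum.inr (Sum.inr v), Sum.inl w => v = w
    | Sum.inr (Sum.inl v), Sum.inr (Sum.inr w) => v = w
    | Sum.inr (Sum.inr v), Sum.inr (Sum.inl w) => v = w
    | _, _ => False
  symm := by
    constructor
    rintro (v | v | v) (w | w | w) h
    · exact G.symm.symm _ _ h
    · exact h.symm
    · exact h.symm
    · exact h.symm
    · exact h
    · exact h.symm
    · exact h.symm
    · exact h.symm
    · exact h
  loopless := by
    constructor
    rintro (v | v | v) h
    · exact G.loopless.irrefl v h
    · exact h
    · exact h

/-- The largest rank that `v` assigns to a neighbour in `G`. -/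
def maxRank {V : Type} (G : SimpleGraph V) (rk : V → V → ℕ∞) (v : V) : ℕ∞ :=
  ⨆ w ∈ G.neighborSet v, rk v w

/-- The ranks for the triangle-augmented instance: writing `α_v` for the largest rank
`v` assigns to a neighbour in `G`, we set `rk_v(v') = α_v + 1`, `rk_v(v'') = α_v + 2`,
`rk_{v'}(v) = 2`, `rk_{v'}(v'') = 1`, `rk_{v''}(v) = 1` and `rk_{v''}(v') = 2`;
all other (non-adjacent) pairs get rank `⊤`. -/
def triRank {V : Type} [DecidableEq V] (G : SimpleGraph V) (rk : V → V → ℕ∞) :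
    (V ⊕ V ⊕ V) → (V ⊕ V ⊕ V) → ℕ∞
  | Sum.inl v, Sum.inl w => rk v w
  | Sum.inl v, Sum.inr (Sum.inl w) => if v = w then maxRank G rk v + 1 else ⊤
  | Sum.inl v, Sum.inr (Sum.inr w) => if v = w then maxRank G rk v + 2 else ⊤
  | Sum.inr (Sum.inl v), Sum.inl w => if v = w then 2 else ⊤
  | Sum.inr (Sum.inl v), Sum.inr (Sum.inr w) => if v = w then 1 else ⊤
  | Sum.inr (Sum.inr v), Sum.inl w => if v = w then 1 else ⊤
  | Sum.inr (Sum.inr v), Sum.inr (Sum.inl w) => if v = w then 2 else ⊤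
  | _, _ => ⊤

/-!
Stability of `M'` forces every original vertex `v` to be matched inside `V`. If `v` were matched
to `v'`, then `v''` would be single and `{v'', v'}` would block; if `v` were matched to `v''`, then
`v'` would be single and `{v', v}` would block, since `v` prefers `v'` to `v''`; if `v` were
single, then `{v, v'}` would block when `v'` is single and `{v, v''}` when `v'` is matched to `v''`.
The comparisons involving `α_v + 1` and `α_v + 2` need `α_v < ⊤`, which holds because `v` has
finitely many neighbours, all of finite rank. Hence `M'` restricts to a perfect matching of `G`,
and a blocking edge for the restriction would block `M'`.
-/

open Sum

theorem maxRank_ne_top {V : Type} {G : SimpleGraph V} {rk : V → V → ℕ∞} {v : V}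
    [Finite (G.neighborSet v)] (hfin : ∀ w, G.Adj v w → rk v w ≠ ⊤) :
    maxRank G rk v ≠ ⊤ := by
  rw [maxRank, iSup_subtype']
  exact iSup_ne_top fun w => hfin w w.2

namespace Matching

variable {V W : Type} {G : SimpleGraph V} {H : SimpleGraph W}

theorem partner_eq_symm (M : Matching G) {x y : V} (h : M.partner x = y) : M.partner y = x :=
  h ▸ M.involutive x

theorem partner_eq_self_of_forall_adj (M : Matching G) {x : V}
    (h : ∀ y, G.Adj x y → M.partner y ≠ x) : M.partner x = x := by
  by_contra hx
  exact h _ (M.adj_of_ne x hx) (M.involutive x)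

def comap (M : Matching H) (φ : G ↪g H) (f : V → V) (hf : ∀ v, M.partner (φ v) = φ (f v)) :
    Matching G where
  partner := f
  involutive v := φ.injective <| by rw [← hf, ← hf, M.involutive]
  adj_of_ne v hv := φ.map_rel_iff.1 <| by
    rw [← hf]
    exact M.adj_of_ne _ (by rw [hf]; exact φ.injective.ne hv)

end Matching

theorem Stable.comap {V W : Type} {G : SimpleGraph V} {H : SimpleGraph W}
    {rk : V → V → ℕ∞} {rk' : W → W → ℕ∞} {M : Matching H} (hM : Stable H rk' M)
    (φ : G ↪g H) (hrk : ∀ v w, rk' (φ v) (φ w) = rk v w) (f : V → V)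
    (hf : ∀ v, M.partner (φ v) = φ (f v)) : Stable G rk (M.comap φ f hf) := by
  rintro v w ⟨hadj, hv, hw⟩
  refine hM (φ v) (φ w) ⟨φ.map_rel_iff.2 hadj, ?_, ?_⟩
  · rwa [hf, hrk, hrk]
  · rwa [hf, hrk, hrk]

section triGraph

variable {V : Type} {G : SimpleGraph V}

def triGraphEmbedding (G : SimpleGraph V) : G ↪g triGraph G :=
  ⟨Function.Embedding.inl, Iff.rfl⟩

theorem triGraph_adj_inr_inl_iff {v : V} {x : V ⊕ V ⊕ V} :
    (triGraph G).Adj (inr (inl v)) x ↔ x = inl v ∨ x = inr (inr v) := by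
  rcases x with w | w | w <;> simp [triGraph, eq_comm]

theorem triGraph_adj_inr_inr_iff {v : V} {x : V ⊕ V ⊕ V} :
    (triGraph G).Adj (inr (inr v)) x ↔ x = inl v ∨ x = inr (inl v) := by
  rcases x with w | w | w <;> simp [triGraph, eq_comm]

end triGraph

section triStable

variable {V : Type} [DecidableEq V] {G : SimpleGraph V} {rk : V → V → ℕ∞}
  {M' : Matching (triGraph G)}

theorem Stable.partner_inl_ne_inr_inl (hM' : Stable (triGraph G) (triRank G rk) M') (v : V) :
    M'.partner (inl v) ≠ inr (inl v) := by
  intro h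
  have h' := M'.partner_eq_symm h
  have hv'' : M'.partner (inr (inr v)) = inr (inr v) :=
    M'.partner_eq_self_of_forall_adj fun y hy => by
      rcases triGraph_adj_inr_inr_iff.1 hy with rfl | rfl <;> simp [h, h']
  exact hM' (inr (inr v)) (inr (inl v))
    ⟨rfl, by simp [hv'', triRank, lt_top_iff_ne_top], by simp [h', triRank]⟩

theorem Stable.partner_inl_ne_inr_inr (hM' : Stable (triGraph G) (triRank G rk) M') {v : V}
    (hα : maxRank G rk v ≠ ⊤) : M'.partner (inl v) ≠ inr (inr v) := by
  intro h
  have h' := M'.partner_eq_symm h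
  have hv' : M'.partner (inr (inl v)) = inr (inl v) :=
    M'.partner_eq_self_of_forall_adj fun y hy => by
      rcases triGraph_adj_inr_inl_iff.1 hy with rfl | rfl <;> simp [h, h']
  refine hM' (inr (inl v)) (inl v) ⟨rfl, by simp [hv', triRank, lt_top_iff_ne_top], ?_⟩
  simpa [h, triRank] using (ENat.add_lt_add_iff_left hα).2 (by norm_num : (1 : ℕ∞) < 2)

theorem Stable.partner_inl_ne_self (hM' : Stable (triGraph G) (triRank G rk) M') {v : V}
    (hself : rk v v = ⊤) (hα : maxRank G rk v ≠ ⊤) : M'.partner (inl v) ≠ inl v := by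
  intro h
  by_cases hv' : M'.partner (inr (inl v)) = inr (inl v)
  · exact hM' (inl v) (inr (inl v))
      ⟨rfl, by simp [h, triRank, hself, lt_top_iff_ne_top, hα],
        by simp [hv', triRank, lt_top_iff_ne_top]⟩
  rcases triGraph_adj_inr_inl_iff.1 (M'.adj_of_ne _ hv') with h' | h'
  · exact inl_ne_inr (h ▸ M'.partner_eq_symm h')
  · exact hM' (inl v) (inr (inr v))
      ⟨rfl, by simp [h, triRank, hself, lt_top_iff_ne_top, hα],
        by simp [M'.partner_eq_symm h', triRank]⟩

theorem Stable.exists_partner_inl_eq_inl (hM' : Stable (triGraph G) (triRank G rk) M')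
    (hself : ∀ v, rk v v = ⊤) (hα : ∀ v, maxRank G rk v ≠ ⊤) (v : V) :
    ∃ w, w ≠ v ∧ M'.partner (inl v) = inl w := by
  have hne := hM'.partner_inl_ne_self (hself v) (hα v)
  have hadj := M'.adj_of_ne _ hne
  rcases h : M'.partner (inl v) with w | w | w
  · exact ⟨w, fun hw => hne (by rw [h, hw]), rfl⟩
  all_goals
    rw [h] at hadj
    obtain rfl : v = w := hadj
  · exact absurd h (hM'.partner_inl_ne_inr_inl v)
  · exact absurd h (hM'.partner_inl_ne_inr_inr (hα v))

end triStable

/-- Triangle augmentation, backward direction: if the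
triangle-augmented instance has a stable matching `M'`, then every original vertex `v`
is matched in `M'` to an original vertex, and the restriction of `M'` to the edges of
`G` is a perfect stable matching of `G`. -/
theorem perfect_stable_of_triGraph_stable {V : Type} [Fintype V] [DecidableEq V]
    (G : SimpleGraph V) (rk : V → V → ℕ∞)
    (hself : ∀ v, rk v v = ⊤)
    (hfin : ∀ v w, G.Adj v w → rk v w ≠ ⊤)
    (M' : Matching (triGraph G)) (hM' : Stable (triGraph G) (triRank G rk) M') :
    (∀ v : V, ∃ w : V, w ≠ v ∧ M'.partner (Sum.inl v) = Sum.inl w) ∧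
    ∃ M : Matching G,
      (∀ v : V, Sum.inl (M.partner v) = M'.partner (Sum.inl v)) ∧
      Stable G rk M ∧ (∀ v : V, M.partner v ≠ v) := by
  have hinl := hM'.exists_partner_inl_eq_inl hself fun v => maxRank_ne_top (hfin v)
  refine ⟨hinl, ?_⟩
  choose f hfv hf using hinl
  exact ⟨M'.comap (triGraphEmbedding G) f hf, fun v => (hf v).symm,
    hM'.comap (triGraphEmbedding G) (fun _ _ => rfl) f hf, hfv⟩
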